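/- Let X be a finite metric space partitioned into two disjoint groups X_1, X_2, let k_1, k_2 ≥ 1 with |X_i| ≥ k_i for i = 1,2 and k = k_1 + k_2 ≥ 2, and let ε ∈ (0,1). Suppose that for every μ in the grid U there are: a greedy candidate S_μ on Y = X with threshold μ and capacity k, and for each i ∈ {1,2} a greedy candidate S_{μ,i} on Y = X_i with threshold μ and capacity k_i. Then there exists a fair set S contained in ⋃_{μ∈U} (S_μ ∪ S_{μ,1} ∪ S_{μ,2}) with div(S) ≥ ((1−ε)/4) · OPT_f. (Theorem 2: the (1−ε)/4 approximation guarantee of SFDM1 for fair max–min diversity maximization with two groups.) -/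

import Mathlib

open Finset

variable {α : Type*} [MetricSpace α] [DecidableEq α]

/-- A finite set `S` is `μ`-separated if `d(x,y) ≥ μ` for all distinct `x, y ∈ S`. -/
def Separated (μ : ℝ) (S : Finset α) : Prop :=
  ∀ x ∈ S, ∀ y ∈ S, x ≠ y → μ ≤ dist x y

/-- Max–min diversity of a finite set: the minimum pairwise distance over distinct pairs. -/
noncomputable def divers (S : Finset α) : ℝ :=
  sInf {r : ℝ | ∃ x ∈ S, ∃ y ∈ S, x ≠ y ∧ dist x y = r}

/-- Distance from a point to a (nonempty) finite set: `d(y,S) = min_{s ∈ S} d(y,s)`. -/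
noncomputable def setDist (y : α) (S : Finset α) : ℝ :=
  sInf {r : ℝ | ∃ s ∈ S, dist y s = r}

/-- Minimum pairwise distance over distinct pairs of `X`. -/
noncomputable def dMin (X : Finset α) : ℝ :=
  sInf {r : ℝ | ∃ x ∈ X, ∃ y ∈ X, x ≠ y ∧ dist x y = r}

/-- Maximum pairwise distance over distinct pairs of `X`. -/
noncomputable def dMax (X : Finset α) : ℝ :=
  sSup {r : ℝ | ∃ x ∈ X, ∃ y ∈ X, x ≠ y ∧ dist x y = r}

/-- The geometric grid of guesses `U = { d_min/(1-ε)^j : j ∈ ℕ } ∩ [d_min, d_max]`. -/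
def grid (X : Finset α) (ε : ℝ) : Set ℝ :=
  {μ | (∃ j : ℕ, μ = dMin X / (1 - ε) ^ j) ∧ dMin X ≤ μ ∧ μ ≤ dMax X}

/-- A greedy candidate on ground set `Y` with threshold `μ` and capacity `c`:
`S ⊆ Y`, `S` is `μ`-separated, `|S| ≤ c`, and if `|S| < c` then every `y ∈ Y`
satisfies `d(y,S) < μ` (i.e., has some element of `S` within distance `< μ`). -/
def GreedyCandidate (μ : ℝ) (c : ℕ) (Y S : Finset α) : Prop :=
  S ⊆ Y ∧ Separated μ S ∧ S.card ≤ c ∧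
    (S.card < c → ∀ y ∈ Y, ∃ s ∈ S, dist y s < μ)

/-- `OPT`: the maximum of `div(T)` over all `k`-element subsets `T ⊆ X`. -/
noncomputable def OPTk (X : Finset α) (k : ℕ) : ℝ :=
  sSup {r : ℝ | ∃ T ⊆ X, T.card = k ∧ divers T = r}

/-- `OPT_f`: the maximum of `div(S)` over all fair subsets `S ⊆ X`
(those with `|S ∩ X_i| = k_i` for every group `i`). -/
noncomputable def OPTf (X : Finset α) {m : ℕ} (Xg : Fin m → Finset α) (kg : Fin m → ℕ) : ℝ :=
  sSup {r : ℝ | ∃ S ⊆ X, (∀ i, (S ∩ Xg i).card = kg i) ∧ divers S = r}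

/-- The chain relation on `P` with threshold `τ`: the reflexive–transitive closure of
"both points are in `P` and their distance is `< τ`". -/
def ChainRel (P : Finset α) (τ : ℝ) : α → α → Prop :=
  Relation.ReflTransGen (fun x y => x ∈ P ∧ y ∈ P ∧ dist x y < τ)

/-! Let `T` be an optimal fair set and `OPT = div(T)`. The grid contains a guess `μ` with
`(1 - ε) OPT / 2 ≤ μ` and either `2μ ≤ OPT` or `μ = d_min`; in both cases every `μ`-ball around
a point of `X` contains at most one point of `T`, so a greedy candidate that stopped short of its
capacity would cover `T ∩ Y` by fewer balls than it has points: all candidates are full.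
As `|S₀| = k₁ + k₂`, the candidate `S₀` for `X` has at most `kᵢ` points in some group, say `X₁`.
Top `S₀ ∩ X₁` up to `k₁` points with points of the candidate for `X₁` that are `μ/2`-far from
it, and keep `k₂` points of `S₀ ∩ X₂` that are `μ/2`-far from the new points; both choices are
possible because a `μ`-separated set has at most one point within `μ/2` of any given point.
The result is fair and `μ/2`-separated, so its diversity is at least `(1 - ε) OPT / 4`. -/

section Diversity

omit [DecidableEq α]

-- `divers S = sInf (pairDists S)` and `dMin S = divers S` hold by `rfl`.
def pairDists (S : Finset α) : Set ℝ := {r | ∃ x ∈ S, ∃ y ∈ S, x ≠ y ∧ dist x y = r}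

theorem pairDists_finite (S : Finset α) : (pairDists S).Finite :=
  ((S ×ˢ S).finite_toSet.image fun p => dist p.1 p.2).subset <| by
    rintro _ ⟨x, hx, y, hy, -, rfl⟩
    exact ⟨(x, y), by simp [hx, hy], rfl⟩

theorem divers_le_dist {S : Finset α} {x y : α} (hx : x ∈ S) (hy : y ∈ S) (hxy : x ≠ y) :
    divers S ≤ dist x y :=
  csInf_le ⟨0, by rintro _ ⟨x, -, y, -, -, rfl⟩; exact dist_nonneg⟩ ⟨x, hx, y, hy, hxy, rfl⟩

theorem separated_divers (S : Finset α) : Separated (divers S) S :=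
  fun _ hx _ hy hxy => divers_le_dist hx hy hxy

theorem Separated.le_divers {r : ℝ} {S : Finset α} (h : Separated r S) (hS : 1 < #S) :
    r ≤ divers S := by
  obtain ⟨x, hx, y, hy, hxy⟩ := one_lt_card.1 hS
  refine le_csInf ⟨_, x, hx, y, hy, hxy, rfl⟩ ?_
  rintro _ ⟨x, hx, y, hy, hxy, rfl⟩
  exact h x hx y hy hxy

theorem divers_pos {S : Finset α} (hS : 1 < #S) : 0 < divers S := by
  obtain ⟨x, hx, y, hy, hxy⟩ := one_lt_card.1 hS
  obtain ⟨x, -, y, -, hxy, hd⟩ : divers S ∈ pairDists S :=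
    Set.Nonempty.csInf_mem ⟨_, x, hx, y, hy, hxy, rfl⟩ (pairDists_finite S)
  exact hd ▸ dist_pos.2 hxy

theorem divers_le_divers {S T : Finset α} (hST : S ⊆ T) (hS : 1 < #S) : divers T ≤ divers S :=
  Separated.le_divers (fun _ hx _ hy hxy => divers_le_dist (hST hx) (hST hy) hxy) hS

theorem divers_le_dMax {S T : Finset α} (hST : S ⊆ T) (hS : 1 < #S) : divers S ≤ dMax T := by
  obtain ⟨x, hx, y, hy, hxy⟩ := one_lt_card.1 hS
  exact (divers_le_dist hx hy hxy).trans <|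
    le_csSup (pairDists_finite T).bddAbove ⟨x, hST hx, y, hST hy, hxy, rfl⟩

theorem exists_divers_eq_sSup {X : Finset α} {p : Finset α → Prop} (h : ∃ S ⊆ X, p S) :
    ∃ S ⊆ X, p S ∧ divers S = sSup {r | ∃ S ⊆ X, p S ∧ divers S = r} := by
  obtain ⟨S, hSX, hS⟩ := h
  have hfin : {r | ∃ S ⊆ X, p S ∧ divers S = r}.Finite := by
    refine (X.powerset.finite_toSet.image divers).subset ?_
    rintro _ ⟨S, hSX, -, rfl⟩
    exact ⟨S, by simpa using hSX, rfl⟩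
  exact Set.Nonempty.csSup_mem (s := {r | ∃ S ⊆ X, p S ∧ divers S = r}) ⟨_, S, hSX, hS, rfl⟩ hfin

end Diversity

section Separation

variable {r : ℝ} {S T : Finset α}

omit [DecidableEq α] in
theorem Separated.mono (h : Separated r S) {r' : ℝ} (hr : r' ≤ r) : Separated r' S :=
  fun x hx y hy hxy => hr.trans (h x hx y hy hxy)

omit [DecidableEq α] in
theorem Separated.subset (h : Separated r T) (hST : S ⊆ T) : Separated r S :=
  fun x hx y hy hxy => h x (hST hx) y (hST hy) hxy

theorem Separated.union (hS : Separated r S) (hT : Separated r T)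
    (hST : ∀ x ∈ S, ∀ y ∈ T, r ≤ dist x y) : Separated r (S ∪ T) := by
  intro x hx y hy hxy
  rcases mem_union.1 hx with hx | hx <;> rcases mem_union.1 hy with hy | hy
  · exact hS x hx y hy hxy
  · exact hST x hx y hy
  · exact dist_comm x y ▸ hST y hy x hx
  · exact hT x hx y hy hxy

omit [DecidableEq α] in
theorem Separated.subsingleton_dist_lt (h : Separated r S) (z : α) :
    {x ∈ (S : Set α) | dist x z < r / 2}.Subsingleton := by
  rintro x ⟨hx, hxz⟩ y ⟨hy, hyz⟩
  by_contra hxy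
  linarith [h x hx y hy hxy, dist_triangle_right x y z]

omit [DecidableEq α] in
theorem Separated.card_filter_exists_dist_lt_le (h : Separated r S) (A : Finset α) :
    #(S.filter fun x => ∃ a ∈ A, dist x a < r / 2) ≤ #A :=
  card_le_card_of_forall_subsingleton (fun x a => dist x a < r / 2)
    (fun _ hx => (mem_filter.1 hx).2)
    (fun a _ => (h.subsingleton_dist_lt a).anti fun _ ⟨hx, hxa⟩ => ⟨(mem_filter.1 hx).1, hxa⟩)

omit [DecidableEq α] in
theorem Separated.exists_subset_far (h : Separated r S) (A : Finset α) {m : ℕ}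
    (hm : m + #A ≤ #S) : ∃ P ⊆ S, #P = m ∧ ∀ x ∈ P, ∀ a ∈ A, r / 2 ≤ dist x a := by
  have hsplit := card_filter_add_card_filter_not (s := S) fun x => ∃ a ∈ A, dist x a < r / 2
  have hfar : m ≤ #(S.filter fun x => ¬∃ a ∈ A, dist x a < r / 2) := by
    linarith [h.card_filter_exists_dist_lt_le A]
  obtain ⟨P, hP, hPcard⟩ := exists_subset_card_eq hfar
  refine ⟨P, hP.trans (filter_subset _ _), hPcard, fun x hx a ha => ?_⟩
  exact not_lt.1 fun hlt => (mem_filter.1 (hP hx)).2 ⟨a, ha, hlt⟩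

end Separation

omit [DecidableEq α] in
theorem GreedyCandidate.card_eq {μ : ℝ} {c : ℕ} {Y S W : Finset α} (hS : GreedyCandidate μ c Y S)
    (hWY : W ⊆ Y) (hc : c ≤ #W) (hW : ∀ s ∈ S, {w ∈ (W : Set α) | dist w s < μ}.Subsingleton) :
    #S = c := by
  obtain ⟨-, -, hle, hcov⟩ := hS
  refine hle.eq_or_lt.resolve_right fun hlt => ?_
  have := card_le_card_of_forall_subsingleton (fun w s => dist w s < μ)
    (fun w hw => hcov hlt w (hWY hw)) hW
  omega

omit [DecidableEq α] in
theorem GreedyCandidate.card_eq_of_separated_or_eq_dMin {μ : ℝ} {c : ℕ} {X Y S W : Finset α}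
    (hS : GreedyCandidate μ c Y S) (hYX : Y ⊆ X) (hWY : W ⊆ Y) (hc : c ≤ #W)
    (hW : Separated (2 * μ) W ∨ μ = dMin X) : #S = c := by
  refine hS.card_eq hWY hc fun s hs => ?_
  rcases hW with hW | rfl
  · simpa using hW.subsingleton_dist_lt s
  · have hX : ∀ w ∈ W, dist w s < dMin X → w = s := fun w hw h =>
      by_contra fun hne => (divers_le_dist (hYX (hWY hw)) (hYX (hS.1 hs)) hne).not_gt h
    rintro w ⟨hw, hws⟩ w' ⟨hw', hw's⟩
    rw [hX w hw hws, hX w' hw' hw's]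

section TwoGroups

variable {X₁ X₂ : Finset α}

omit [MetricSpace α] in
theorem union_inter_eq_left_of_disjoint (hdisj : Disjoint X₁ X₂) {U₁ U₂ : Finset α}
    (h₁ : U₁ ⊆ X₁) (h₂ : U₂ ⊆ X₂) : (U₁ ∪ U₂) ∩ X₁ = U₁ := by
  rw [union_inter_distrib_right, inter_eq_left.2 h₁,
    disjoint_iff_inter_eq_empty.1 (hdisj.symm.mono_left h₂), union_empty]

omit [MetricSpace α] in
theorem card_inter_add_card_inter (hdisj : Disjoint X₁ X₂) {S : Finset α} (hS : S ⊆ X₁ ∪ X₂) :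
    #(S ∩ X₁) + #(S ∩ X₂) = #S := by
  rw [← card_union_of_disjoint (hdisj.mono inter_subset_right inter_subset_right),
    ← inter_union_distrib_left, inter_eq_left.2 hS]

omit [MetricSpace α] in
theorem one_lt_card_of_inter (hdisj : Disjoint X₁ X₂) {S : Finset α} (h₁ : 0 < #(S ∩ X₁))
    (h₂ : 0 < #(S ∩ X₂)) : 1 < #S := by
  have : #(S ∩ X₁ ∪ S ∩ X₂) ≤ #S := card_le_card (union_subset inter_subset_left inter_subset_left)
  rw [card_union_of_disjoint (hdisj.mono inter_subset_right inter_subset_right)] at this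
  omega

theorem exists_fair_subset_union_of_card_inter_le {S₀ T : Finset α} {k₁ k₂ : ℕ} {μ : ℝ}
    (hμ : 0 < μ) (hdisj : Disjoint X₁ X₂) (hS₀ : S₀ ⊆ X₁ ∪ X₂) (hS₀sep : Separated μ S₀)
    (hS₀card : #S₀ = k₁ + k₂) (hT : T ⊆ X₁) (hTsep : Separated μ T) (hTcard : #T = k₁)
    (hle : #(S₀ ∩ X₁) ≤ k₁) :
    ∃ S ⊆ S₀ ∪ T, #(S ∩ X₁) = k₁ ∧ #(S ∩ X₂) = k₂ ∧ Separated (μ / 2) S := by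
  have hAB : #(S₀ ∩ X₁) + #(S₀ ∩ X₂) = k₁ + k₂ := hS₀card ▸ card_inter_add_card_inter hdisj hS₀
  obtain ⟨P, hPT, hPcard, hPA⟩ :=
    hTsep.exists_subset_far (S₀ ∩ X₁) (m := k₁ - #(S₀ ∩ X₁)) (by omega)
  obtain ⟨Q, hQB, hQcard, hQP⟩ :=
    (hS₀sep.subset (inter_subset_left (s₂ := X₂))).exists_subset_far P (m := k₂) (by omega)
  have hAP : Disjoint (S₀ ∩ X₁) P := disjoint_left.2 fun x hxA hxP => by
    linarith [hPA x hxP x hxA, dist_self x]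
  have hAQ : S₀ ∩ X₁ ∪ Q ⊆ S₀ := union_subset inter_subset_left (hQB.trans inter_subset_left)
  refine ⟨S₀ ∩ X₁ ∪ Q ∪ P, union_subset_union hAQ hPT, ?_, ?_, ?_⟩
  · rw [union_right_comm, union_inter_eq_left_of_disjoint hdisj
      (union_subset inter_subset_right (hPT.trans hT)) (hQB.trans inter_subset_right),
      card_union_of_disjoint hAP]
    omega
  · rw [union_right_comm, union_comm, union_inter_eq_left_of_disjoint hdisj.symm
      (hQB.trans inter_subset_right) (union_subset inter_subset_right (hPT.trans hT)), hQcard]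
  · refine ((hS₀sep.subset hAQ).mono (by linarith)).union
      ((hTsep.subset hPT).mono (by linarith)) fun x hx y hy => ?_
    rcases mem_union.1 hx with hx | hx
    · exact dist_comm x y ▸ hPA y hy x hx
    · exact hQP x hx y hy

theorem exists_fair_subset_union {S₀ T₁ T₂ : Finset α} {k₁ k₂ : ℕ} {μ : ℝ} (hμ : 0 < μ)
    (hdisj : Disjoint X₁ X₂) (hS₀ : S₀ ⊆ X₁ ∪ X₂) (hS₀sep : Separated μ S₀)
    (hS₀card : #S₀ = k₁ + k₂) (hT₁ : T₁ ⊆ X₁) (hT₁sep : Separated μ T₁) (hT₁card : #T₁ = k₁)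
    (hT₂ : T₂ ⊆ X₂) (hT₂sep : Separated μ T₂) (hT₂card : #T₂ = k₂) :
    ∃ S ⊆ S₀ ∪ T₁ ∪ T₂, #(S ∩ X₁) = k₁ ∧ #(S ∩ X₂) = k₂ ∧ Separated (μ / 2) S := by
  have hsum := card_inter_add_card_inter hdisj hS₀
  rcases le_or_gt #(S₀ ∩ X₁) k₁ with h | h
  · obtain ⟨S, hS, hS₁, hS₂, hsep⟩ := exists_fair_subset_union_of_card_inter_le hμ hdisj hS₀
      hS₀sep hS₀card hT₁ hT₁sep hT₁card h
    exact ⟨S, hS.trans subset_union_left, hS₁, hS₂, hsep⟩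
  · obtain ⟨S, hS, hS₂, hS₁, hsep⟩ := exists_fair_subset_union_of_card_inter_le
      (k₁ := k₂) (k₂ := k₁) hμ hdisj.symm (by rwa [union_comm]) hS₀sep (by omega)
      hT₂ hT₂sep hT₂card (by omega)
    exact ⟨S, hS.trans (union_subset_union_left subset_union_left), hS₁, hS₂, hsep⟩

theorem exists_fair_divers_eq_sSup {X : Finset α} {k₁ k₂ : ℕ} (hdisj : Disjoint X₁ X₂)
    (hunion : X = X₁ ∪ X₂) (hc₁ : k₁ ≤ #X₁) (hc₂ : k₂ ≤ #X₂) :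
    ∃ T ⊆ X, #(T ∩ X₁) = k₁ ∧ #(T ∩ X₂) = k₂ ∧
      divers T = sSup {r | ∃ S ⊆ X, #(S ∩ X₁) = k₁ ∧ #(S ∩ X₂) = k₂ ∧ divers S = r} := by
  obtain ⟨T₁, hT₁, hT₁card⟩ := exists_subset_card_eq hc₁
  obtain ⟨T₂, hT₂, hT₂card⟩ := exists_subset_card_eq hc₂
  simpa only [and_assoc] using exists_divers_eq_sSup (X := X)
    (p := fun S => #(S ∩ X₁) = k₁ ∧ #(S ∩ X₂) = k₂) ⟨T₁ ∪ T₂, hunion ▸ union_subset_union hT₁ hT₂,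
      by rwa [union_inter_eq_left_of_disjoint hdisj hT₁ hT₂],
      by rwa [union_comm, union_inter_eq_left_of_disjoint hdisj.symm hT₂ hT₁]⟩

end TwoGroups

theorem exists_div_pow_mem_Ioc {d t q : ℝ} (hd : 0 < d) (hdt : d ≤ t) (hq0 : 0 < q)
    (hq1 : q < 1) : ∃ j : ℕ, d / q ^ j ∈ Set.Ioc (q * t) t := by
  obtain ⟨j, hj, hj'⟩ := exists_nat_pow_near ((one_le_div hd).2 hdt) ((one_lt_inv₀ hq0).2 hq1)
  refine ⟨j, ?_, ?_⟩
  · calc q * t = q * d * (t / d) := by field_simp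
      _ < q * d * q⁻¹ ^ (j + 1) := by gcongr
      _ = d / q ^ j := by rw [inv_pow, pow_succ]; field_simp
  · calc d / q ^ j = d * q⁻¹ ^ j := by rw [inv_pow, div_eq_mul_inv]
      _ ≤ d * (t / d) := by gcongr
      _ = t := mul_div_cancel₀ t hd.ne'

omit [DecidableEq α] in
theorem exists_mem_grid {X T : Finset α} {ε : ℝ} (hε0 : 0 < ε) (hε1 : ε < 1) (hTX : T ⊆ X)
    (hT : 1 < #T) :
    ∃ μ ∈ grid X ε, (1 - ε) * divers T / 2 ≤ μ ∧ (2 * μ ≤ divers T ∨ μ = dMin X) := by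
  have hd : 0 < dMin X := divers_pos (hT.trans_le (card_le_card hTX))
  have hdT : dMin X ≤ divers T := divers_le_divers hTX hT
  have hTmax : divers T ≤ dMax X := divers_le_dMax hTX hT
  by_cases h : 2 * dMin X ≤ divers T
  · obtain ⟨j, hj, hj'⟩ := exists_div_pow_mem_Ioc hd (by linarith : dMin X ≤ divers T / 2)
      (by linarith : 0 < 1 - ε) (by linarith)
    refine ⟨dMin X / (1 - ε) ^ j, ⟨⟨j, rfl⟩, ?_, by linarith⟩, by linarith, Or.inl (by linarith)⟩
    exact le_div_self hd.le (pow_pos (by linarith) j) (pow_le_one₀ (by linarith) (by linarith))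
  · refine ⟨dMin X, ⟨⟨0, by simp⟩, le_rfl, hdT.trans hTmax⟩, ?_, Or.inr rfl⟩
    nlinarith [divers_pos hT]

theorem stmt_6_general (X X₁ X₂ : Finset α) (k₁ k₂ : ℕ) (ε : ℝ)
    (hdisj : Disjoint X₁ X₂) (hunion : X = X₁ ∪ X₂)
    (hk₁ : 1 ≤ k₁) (hk₂ : 1 ≤ k₂)
    (hc₁ : k₁ ≤ X₁.card) (hc₂ : k₂ ≤ X₂.card)
    (hε0 : 0 < ε) (hε1 : ε < 1)
    (S₀ S₁ S₂ : ℝ → Finset α)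
    (hS₀ : ∀ μ ∈ grid X ε, GreedyCandidate μ (k₁ + k₂) X (S₀ μ))
    (hS₁ : ∀ μ ∈ grid X ε, GreedyCandidate μ k₁ X₁ (S₁ μ))
    (hS₂ : ∀ μ ∈ grid X ε, GreedyCandidate μ k₂ X₂ (S₂ μ)) :
    ∃ S : Finset α,
      (↑S : Set α) ⊆ (⋃ μ ∈ grid X ε, ((S₀ μ ∪ S₁ μ ∪ S₂ μ : Finset α) : Set α)) ∧
      (S ∩ X₁).card = k₁ ∧ (S ∩ X₂).card = k₂ ∧
      (1 - ε) / 4 *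
        sSup {r : ℝ | ∃ S' ⊆ X, (S' ∩ X₁).card = k₁ ∧ (S' ∩ X₂).card = k₂ ∧ divers S' = r}
        ≤ divers S := by
  obtain ⟨T, hTX, hT₁, hT₂, hTopt⟩ := exists_fair_divers_eq_sSup hdisj hunion hc₁ hc₂
  rw [← hTopt]
  have hTcard : #T = k₁ + k₂ := by rw [← hT₁, ← hT₂, card_inter_add_card_inter hdisj (hunion ▸ hTX)]
  have hT : 1 < #T := one_lt_card_of_inter hdisj (by omega) (by omega)
  obtain ⟨μ, hμ, hμT, hμfull⟩ := exists_mem_grid hε0 hε1 hTX hT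
  have hμ0 : 0 < μ := (div_pos (mul_pos (by linarith) (divers_pos hT)) two_pos).trans_le hμT
  have hW {W : Finset α} (hWT : W ⊆ T) : Separated (2 * μ) W ∨ μ = dMin X :=
    hμfull.imp_left fun h => ((separated_divers T).mono h).subset hWT
  have hG₀ := hS₀ μ hμ
  have hG₁ := hS₁ μ hμ
  have hG₂ := hS₂ μ hμ
  obtain ⟨S, hS, hSX₁, hSX₂, hsep⟩ := exists_fair_subset_union hμ0 hdisj (hunion ▸ hG₀.1) hG₀.2.1
    (hG₀.card_eq_of_separated_or_eq_dMin subset_rfl hTX hTcard.ge (hW subset_rfl))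
    hG₁.1 hG₁.2.1 (hG₁.card_eq_of_separated_or_eq_dMin (hunion ▸ subset_union_left)
      inter_subset_right hT₁.ge (hW inter_subset_left))
    hG₂.1 hG₂.2.1 (hG₂.card_eq_of_separated_or_eq_dMin (hunion ▸ subset_union_right)
      inter_subset_right hT₂.ge (hW inter_subset_left))
  refine ⟨S, (coe_subset.2 hS).trans (Set.subset_biUnion_of_mem
    (u := fun μ => ((S₀ μ ∪ S₁ μ ∪ S₂ μ : Finset α) : Set α)) hμ), hSX₁, hSX₂, ?_⟩
  calc (1 - ε) / 4 * divers T = (1 - ε) * divers T / 2 / 2 := by ring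
    _ ≤ μ / 2 := by linarith
    _ ≤ divers S := hsep.le_divers (one_lt_card_of_inter hdisj (by omega) (by omega))

/-- Theorem 2: the `(1-ε)/4` approximation guarantee of SFDM1 for fair max–min
diversity maximization with two groups. -/
theorem stmt_6 (X X₁ X₂ : Finset α) (k₁ k₂ : ℕ) (ε : ℝ)
    (hdisj : Disjoint X₁ X₂) (hunion : X = X₁ ∪ X₂)
    (hne₁ : X₁.Nonempty) (hne₂ : X₂.Nonempty)
    (hk₁ : 1 ≤ k₁) (hk₂ : 1 ≤ k₂)
    (hc₁ : k₁ ≤ X₁.card) (hc₂ : k₂ ≤ X₂.card) (hk : 2 ≤ k₁ + k₂)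
    (hε0 : 0 < ε) (hε1 : ε < 1)
    (S₀ S₁ S₂ : ℝ → Finset α)
    (hS₀ : ∀ μ ∈ grid X ε, GreedyCandidate μ (k₁ + k₂) X (S₀ μ))
    (hS₁ : ∀ μ ∈ grid X ε, GreedyCandidate μ k₁ X₁ (S₁ μ))
    (hS₂ : ∀ μ ∈ grid X ε, GreedyCandidate μ k₂ X₂ (S₂ μ)) :
    ∃ S : Finset α,
      (↑S : Set α) ⊆ (⋃ μ ∈ grid X ε, ((S₀ μ ∪ S₁ μ ∪ S₂ μ : Finset α) : Set α)) ∧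
      (S ∩ X₁).card = k₁ ∧ (S ∩ X₂).card = k₂ ∧
      (1 - ε) / 4 *
        sSup {r : ℝ | ∃ S' ⊆ X, (S' ∩ X₁).card = k₁ ∧ (S' ∩ X₂).card = k₂ ∧ divers S' = r}
        ≤ divers S :=
  stmt_6_general X X₁ X₂ k₁ k₂ ε hdisj hunion hk₁ hk₂ hc₁ hc₂ hε0 hε1 S₀ S₁ S₂ hS₀ hS₁ hS₂
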